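/- Let k ≥ 1 and let Q be a finite set of size 2k+1 with a commutative, idempotent binary operation ∘ such that for every a ∈ Q the map x ↦ a∘x is a bijection of Q, and let S be the Bose triple system on Q × {0,1,2} (edges {(a,0),(a,1),(a,2)} for a ∈ Q, and {(a,i),(b,i),(a∘b, i+1 mod 3)} for distinct a,b ∈ Q and i ∈ {0,1,2}). Then mc_3(S) ≤ 4k + 2 + ⌈(2k+1)/3⌉; in particular, there is a 3-coloring of the edges of S in which every color class touches at most 4k + 2 + ⌈(2k+1)/3⌉ vertices. -/

import Mathlib

universe u

/-- The shadow graph of the color class `c` of the edge-coloring `χ`. -/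
def colorGraph {V : Type u} {r : ℕ} (E : Finset (Finset V)) (χ : Finset V → Fin r)
    (c : Fin r) : SimpleGraph V where
  Adj x y := x ≠ y ∧ ∃ e ∈ E, χ e = c ∧ x ∈ e ∧ y ∈ e
  symm := by
    constructor
    rintro x y ⟨hxy, e, he, hc, hx, hy⟩
    exact ⟨hxy.symm, e, he, hc, hy, hx⟩
  loopless := by
    constructor
    rintro x ⟨h, -⟩
    exact h rfl

/-- The largest order of a monochromatic component under the edge-coloring `χ`. -/
noncomputable def maxMonoComponent {V : Type u} (r : ℕ) (E : Finset (Finset V))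
    (χ : Finset V → Fin r) : ℕ :=
  sSup {m | ∃ c : Fin r, ∃ K : (colorGraph E χ c).ConnectedComponent, m = K.supp.ncard}

/-- `mc r E`: the largest `m` such that every `r`-coloring of the edges of `E` yields a
monochromatic component of order at least `m` (equivalently, the minimum over all colorings
of the largest order of a monochromatic component). -/
noncomputable def mc {V : Type u} (r : ℕ) (E : Finset (Finset V)) : ℕ :=
  sInf {m | ∃ χ : Finset V → Fin r, m = maxMonoComponent r E χ}

/-- The edge set of the Bose construction on `Q × {0,1,2}` from a binary operation `∘` on `Q`:
Type 1 edges `{(a,0),(a,1),(a,2)}` for `a ∈ Q`, and Type 2 edges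
`{(a,i),(b,i),(a∘b, i+1 mod 3)}` for distinct `a, b ∈ Q` and `i ∈ {0,1,2}`. -/
def boseEdges {Q : Type u} [Fintype Q] [DecidableEq Q] (op : Q → Q → Q) :
    Finset (Finset (Q × Fin 3)) :=
  (Finset.univ.image fun a : Q =>
    ({(a, 0), (a, 1), (a, 2)} : Finset (Q × Fin 3))) ∪
  ((Finset.univ.filter fun p : Q × Q × Fin 3 => p.1 ≠ p.2.1).image fun p =>
    ({(p.1, p.2.2), (p.2.1, p.2.2), (op p.1 p.2.1, p.2.2 + 1)} : Finset (Q × Fin 3)))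

section Aux
variable {Q : Type u} [Fintype Q] [DecidableEq Q]

noncomputable def chi (op : Q → Q → Q) (f : Q → Fin 3) (e : Finset (Q × Fin 3)) : Fin 3 :=
  if h : ∃ a : Q, e = ({(a,0),(a,1),(a,2)} : Finset (Q × Fin 3)) then f h.choose
  else if h2 : ∃ p : Q × Q × Fin 3, p.1 ≠ p.2.1 ∧
      e = ({(p.1,p.2.2),(p.2.1,p.2.2),(op p.1 p.2.1, p.2.2+1)} : Finset (Q × Fin 3)) then
    h2.choose.2.2
  else 0

lemma chi_type1 (op : Q → Q → Q) (f : Q → Fin 3) (a : Q) :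
    chi op f ({(a,0),(a,1),(a,2)} : Finset (Q × Fin 3)) = f a := by
  have h : ∃ x : Q, ({(a,0),(a,1),(a,2)} : Finset (Q × Fin 3)) = {(x,0),(x,1),(x,2)} := ⟨a, rfl⟩
  rw [chi, dif_pos h]
  have hs := h.choose_spec
  have hmem : ((a:Q), (0:Fin 3)) ∈ ({(h.choose,0),(h.choose,1),(h.choose,2)} : Finset (Q × Fin 3)) := by
    rw [← hs]; simp
  simp only [Finset.mem_insert, Finset.mem_singleton, Prod.ext_iff] at hmem
  rcases hmem with ⟨h1, _⟩ | ⟨h1, h2⟩ | ⟨h1, h2⟩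
  · exact congrArg f h1.symm
  · exact absurd h2 (by decide)
  · exact absurd h2 (by decide)

lemma chi_type2 (op : Q → Q → Q) (f : Q → Fin 3) (a b : Q) (i : Fin 3) (hab : a ≠ b) :
    chi op f ({(a,i),(b,i),(op a b, i+1)} : Finset (Q × Fin 3)) = i := by
  have h1 : ¬ ∃ x : Q, ({(a,i),(b,i),(op a b, i+1)} : Finset (Q × Fin 3)) = {(x,0),(x,1),(x,2)} := by
    rintro ⟨x, hx⟩
    have ha : ((a:Q), i) ∈ ({(x,0),(x,1),(x,2)} : Finset (Q × Fin 3)) := by rw [← hx]; simp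
    have hb : ((b:Q), i) ∈ ({(x,0),(x,1),(x,2)} : Finset (Q × Fin 3)) := by rw [← hx]; simp
    simp only [Finset.mem_insert, Finset.mem_singleton, Prod.ext_iff] at ha hb
    apply hab
    rcases ha with ⟨h,_⟩|⟨h,_⟩|⟨h,_⟩ <;> rcases hb with ⟨h',_⟩|⟨h',_⟩|⟨h',_⟩ <;> rw [h, h']
  have h2 : ∃ p : Q × Q × Fin 3, p.1 ≠ p.2.1 ∧ ({(a,i),(b,i),(op a b, i+1)} : Finset (Q × Fin 3))
      = {(p.1,p.2.2),(p.2.1,p.2.2),(op p.1 p.2.1, p.2.2+1)} := ⟨(a,b,i), hab, rfl⟩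
  rw [chi, dif_neg h1, dif_pos h2]
  obtain ⟨hne, hs⟩ := h2.choose_spec
  have ha : ((a:Q), i) ∈ ({(h2.choose.1,h2.choose.2.2),(h2.choose.2.1,h2.choose.2.2),
      (op h2.choose.1 h2.choose.2.1, h2.choose.2.2+1)} : Finset (Q × Fin 3)) := by rw [← hs]; simp
  have hb : ((b:Q), i) ∈ ({(h2.choose.1,h2.choose.2.2),(h2.choose.2.1,h2.choose.2.2),
      (op h2.choose.1 h2.choose.2.1, h2.choose.2.2+1)} : Finset (Q × Fin 3)) := by rw [← hs]; simp
  simp only [Finset.mem_insert, Finset.mem_singleton, Prod.ext_iff] at ha hb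
  by_contra hne2
  rcases ha with ⟨h,h2'⟩|⟨h,h2'⟩|⟨h,h2'⟩ <;> rcases hb with ⟨h',h2''⟩|⟨h',h2''⟩|⟨h',h2''⟩ <;>
    first
    | exact hne2 h2'.symm
    | exact hne2 h2''.symm
    | exact hab (h.trans h'.symm)

end Aux

section Aux2
variable {Q : Type u} [Fintype Q] [DecidableEq Q]

lemma mem_boseEdges (op : Q → Q → Q) (e : Finset (Q × Fin 3)) :
    e ∈ boseEdges op ↔ (∃ a : Q, e = ({(a,0),(a,1),(a,2)} : Finset (Q × Fin 3))) ∨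
      (∃ p : Q × Q × Fin 3, p.1 ≠ p.2.1 ∧
        e = ({(p.1,p.2.2),(p.2.1,p.2.2),(op p.1 p.2.1, p.2.2+1)} : Finset (Q × Fin 3))) := by
  simp [boseEdges, eq_comm, and_comm]

lemma fiber_le {n : ℕ} (eqv : Q ≃ Fin n) (c : ℕ) :
    (Finset.univ.filter fun a : Q => ((eqv a : ℕ) % 3 = c)).card ≤ (n + 2) / 3 := by
  have := Finset.card_le_card_of_injOn (s := Finset.univ.filter fun a : Q => ((eqv a : ℕ) % 3 = c))
    (t := Finset.range ((n + 2) / 3)) (f := fun a : Q => (eqv a : ℕ) / 3) ?_ ?_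
  · simpa using this
  · intro a ha
    simp only [Finset.mem_coe, Finset.mem_filter] at ha
    have : (eqv a : ℕ) < n := (eqv a).2
    simp only [Finset.mem_coe, Finset.mem_range]
    omega
  · intro a ha b hb hdiv
    have hdiv' : (eqv a : ℕ) / 3 = (eqv b : ℕ) / 3 := hdiv
    simp only [Finset.mem_coe, Finset.mem_filter] at ha hb
    have hval : (eqv a : ℕ) = (eqv b : ℕ) := by omega
    exact eqv.injective (Fin.ext hval)

lemma fin3_cases (c j : Fin 3) : j = c ∨ j = c + 1 ∨ j = c + 2 := by revert c j; decide

lemma color_subset (op : Q → Q → Q) (f : Q → Fin 3) (c : Fin 3) :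
    ((boseEdges op).filter (fun e => chi op f e = c)).biUnion id ⊆
      ((Finset.univ.image fun a : Q => (a, c)) ∪ (Finset.univ.image fun a : Q => (a, c+1))) ∪
      ((Finset.univ.filter fun a => f a = c).image fun a => (a, c+2)) := by
  intro v hv
  simp only [Finset.mem_biUnion, Finset.mem_filter, id] at hv
  obtain ⟨e, ⟨heE, hχ⟩, hve⟩ := hv
  simp only [Finset.mem_union, Finset.mem_image, Finset.mem_filter, Finset.mem_univ, true_and]
  rcases (mem_boseEdges op e).1 heE with ⟨a, rfl⟩ | ⟨p, hne, rfl⟩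
  · rw [chi_type1] at hχ
    simp only [Finset.mem_insert, Finset.mem_singleton] at hve
    rcases fin3_cases c v.2 with h | h | h
    · left; left; exact ⟨v.1, by rw [← h]⟩
    · left; right; exact ⟨v.1, by rw [← h]⟩
    · refine Or.inr ⟨v.1, ?_, by rw [← h]⟩
      have hva : v.1 = a := by rcases hve with h'|h'|h' <;> rw [h']
      rw [hva, hχ]
  · rw [chi_type2 op f _ _ _ hne] at hχ
    subst hχ
    simp only [Finset.mem_insert, Finset.mem_singleton] at hve
    rcases hve with h'|h'|h'
    · left; left; exact ⟨p.1, h'.symm⟩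
    · left; left; exact ⟨p.2.1, h'.symm⟩
    · left; right; exact ⟨op p.1 p.2.1, h'.symm⟩

end Aux2

/-- For a Bose triple system `S` built from a commutative idempotent quasigroup of order
`2k+1`, we have `mc_3(S) ≤ 4k + 2 + ⌈(2k+1)/3⌉`; in particular there is a 3-coloring of the
edges of `S` in which every color class touches at most `4k + 2 + ⌈(2k+1)/3⌉` vertices.
(Here `⌈(2k+1)/3⌉` is written as `(2*k + 1 + 2) / 3` using natural division.) -/
theorem stmt18 {Q : Type u} [Fintype Q] [DecidableEq Q] (k : ℕ) (hk : 1 ≤ k)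
    (hQ : Fintype.card Q = 2 * k + 1)
    (op : Q → Q → Q)
    (hcomm : ∀ a b, op a b = op b a)
    (hidem : ∀ a, op a a = a)
    (hbij : ∀ a, Function.Bijective fun x => op a x) :
    mc 3 (boseEdges op) ≤ 4 * k + 2 + (2 * k + 1 + 2) / 3 ∧
    ∃ χ : Finset (Q × Fin 3) → Fin 3, ∀ c : Fin 3,
      (((boseEdges op).filter fun e => χ e = c).biUnion id).card ≤
        4 * k + 2 + (2 * k + 1 + 2) / 3 := by
  have hQne : Nonempty Q := Fintype.card_pos_iff.1 (by omega)
  obtain ⟨a0⟩ := hQne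
  have eqv : Q ≃ Fin (2 * k + 1) := Fintype.equivFinOfCardEq hQ
  set f : Q → Fin 3 := fun a => ⟨(eqv a : ℕ) % 3, by omega⟩ with hf
  set χ := chi op f with hχdef
  -- key cardinality bound for each color class
  have hcard : ∀ c : Fin 3,
      (((boseEdges op).filter fun e => χ e = c).biUnion id).card ≤
        4 * k + 2 + (2 * k + 1 + 2) / 3 := by
    intro c
    rw [hχdef]
    have h1 := Finset.card_le_card (color_subset op f c)
    have h2 := Finset.card_union_le
      ((Finset.univ.image fun a : Q => (a, c)) ∪ (Finset.univ.image fun a : Q => (a, c+1)))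
      ((Finset.univ.filter fun a => f a = c).image fun a => (a, c+2))
    have h3 := Finset.card_union_le (Finset.univ.image fun a : Q => (a, c))
      (Finset.univ.image fun a : Q => (a, c+1))
    have h4 : (Finset.univ.image fun a : Q => (a, c)).card ≤ 2 * k + 1 := by
      calc _ ≤ (Finset.univ : Finset Q).card := Finset.card_image_le
        _ = 2 * k + 1 := by rw [Finset.card_univ, hQ]
    have h5 : (Finset.univ.image fun a : Q => (a, c+1)).card ≤ 2 * k + 1 := by
      calc _ ≤ (Finset.univ : Finset Q).card := Finset.card_image_le
        _ = 2 * k + 1 := by rw [Finset.card_univ, hQ]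
    have h6 : ((Finset.univ.filter fun a => f a = c).image fun a => (a, c+2)).card ≤
        (2 * k + 1 + 2) / 3 := by
      have heq : (Finset.univ.filter fun a => f a = c) =
          (Finset.univ.filter fun a : Q => ((eqv a : ℕ) % 3 = (c : ℕ))) := by
        ext a
        simp only [Finset.mem_filter, Finset.mem_univ, true_and, hf, Fin.ext_iff]
      calc _ ≤ (Finset.univ.filter fun a => f a = c).card := Finset.card_image_le
        _ ≤ (2 * k + 1 + 2) / 3 := by rw [heq]; exact fiber_le eqv (c : ℕ)
    omega
  refine ⟨?_, χ, hcard⟩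
  refine le_trans (Nat.sInf_le ⟨χ, rfl⟩) ?_
  refine csSup_le ⟨_, 0, (colorGraph (boseEdges op) χ 0).connectedComponentMk (a0, 0), rfl⟩ ?_
  rintro m ⟨c, K, rfl⟩
  by_cases hss : K.supp.Subsingleton
  · have h1 : K.supp.ncard ≤ 1 :=
      (Set.ncard_le_one (Set.toFinite _)).2 fun _ ha _ hb => hss ha hb
    omega
  · rw [Set.not_subsingleton_iff] at hss
    obtain ⟨x, hx, y, hy, hxy⟩ := hss
    have hsub : K.supp ⊆ ↑(((boseEdges op).filter fun e => χ e = c).biUnion id) := by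
      intro v hv
      obtain ⟨w, hw, hvw⟩ : ∃ w ∈ K.supp, w ≠ v := by
        by_cases h : v = x
        · exact ⟨y, hy, fun hyv => hxy (by rw [← h, ← hyv])⟩
        · exact ⟨x, hx, fun hxv => h (hxv.symm)⟩
      have hreach : (colorGraph (boseEdges op) χ c).Reachable v w :=
        SimpleGraph.ConnectedComponent.exact (by
          rw [SimpleGraph.ConnectedComponent.mem_supp_iff] at hv hw
          rw [hv, hw])
      obtain ⟨p⟩ := hreach
      cases p with
      | nil => exact absurd rfl hvw
      | cons h p =>
        obtain ⟨hne, e, heE, hec, hve, -⟩ := h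
        exact Finset.mem_coe.2 (Finset.mem_biUnion.2 ⟨e, Finset.mem_filter.2 ⟨heE, hec⟩, hve⟩)
    calc K.supp.ncard
        ≤ (↑(((boseEdges op).filter fun e => χ e = c).biUnion id) : Set (Q × Fin 3)).ncard :=
          Set.ncard_le_ncard hsub (Finset.finite_toSet _)
      _ = (((boseEdges op).filter fun e => χ e = c).biUnion id).card := Set.ncard_coe_finset _
      _ ≤ _ := hcard c
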